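/- arXiv:1812.08851 — 4 statements merged into one kernel-verified Lean document; each statement's English description precedes it below -/
import Mathlib

section
/- There is a constant C > 0 such that for every w in the open unit disk and every R with 0 ≤ R < 1, ∫_{D \ D_R} |1 − conj(w)·z|⁻⁴ dA(z) ≤ C·(1 − R²)/(1 − |w|²)³, where D is the open unit disk, D_R the open disk of radius R centered at 0, and dA two-dimensional Lebesgue measure. -/
/-!
In polar coordinates `z = r e^{iθ}`, with `w = a e^{iφ}` and `b = 1 - a`, one has
`|1 - w̄ z|² = (1 - ra)² + 2ra (1 - cos (θ - φ)) ≥ (b² + (1 - cos (θ - φ))) / 12` for `r < 1`.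
The bound no longer depends on `r`, so the integral over the annulus splits into
`∫_R^1 r dr = (1 - R²) / 2` times an angular integral. By Jordan's inequality
`1 - cos θ ≥ (θ / π)²`, and `∫ (b² + (θ / π)²)⁻² dθ ≤ b⁻² ∫ (b² + (θ / π)²)⁻¹ dθ ≤ π² / b³` by an
arctangent. Finally `1 - a² ≤ 2b`.
-/

open MeasureTheory Real

lemma sq_add_one_sub_cos_pos {b : ℝ} (hb : 0 < b) (x : ℝ) : 0 < b ^ 2 + (1 - cos x) :=
  add_pos_of_pos_of_nonneg (by positivity) (sub_nonneg.2 (cos_le_one x))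

lemma integral_inv_sq_add_mul_sq_le {b c : ℝ} (hb : 0 < b) (hc : 0 < c) {s t : ℝ} (hst : s ≤ t) :
    ∫ x in s..t, ((b ^ 2 + (c * x) ^ 2) ^ 2)⁻¹ ≤ π / (c * b ^ 3) := by
  have hcb : c / b ≠ 0 := by positivity
  calc ∫ x in s..t, ((b ^ 2 + (c * x) ^ 2) ^ 2)⁻¹
      ≤ ∫ x in s..t, (b ^ 4)⁻¹ * (1 + (c / b * x) ^ 2)⁻¹ := by
        refine intervalIntegral.integral_mono_on hst ?_ ?_ fun x _ => ?_
        · exact (Continuous.inv₀ (by fun_prop) fun x => by positivity).intervalIntegrable _ _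
        · exact (continuous_const.mul
            (Continuous.inv₀ (by fun_prop) fun x => by positivity)).intervalIntegrable _ _
        · rw [← mul_inv]
          apply inv_anti₀ (by positivity)
          have : b ^ 4 * (1 + (c / b * x) ^ 2) = b ^ 2 * (b ^ 2 + (c * x) ^ 2) := by
            field_simp
          rw [this, sq (b ^ 2 + _)]
          gcongr
          nlinarith [sq_nonneg (c * x)]
    _ = (b ^ 4)⁻¹ * ((c / b)⁻¹ * (arctan (c / b * t) - arctan (c / b * s))) := by
        rw [intervalIntegral.integral_const_mul,
          intervalIntegral.integral_comp_mul_left (fun x => (1 + x ^ 2)⁻¹) hcb,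
          integral_inv_one_add_sq, smul_eq_mul]
    _ ≤ (b ^ 4)⁻¹ * ((c / b)⁻¹ * π) := by
        gcongr
        linarith [arctan_lt_pi_div_two (c / b * t), neg_pi_div_two_lt_arctan (c / b * s)]
    _ = π / (c * b ^ 3) := by
        field_simp

lemma integral_inv_sq_add_one_sub_cos_le {b : ℝ} (hb : 0 < b) :
    ∫ θ in (-π)..π, ((b ^ 2 + (1 - cos θ)) ^ 2)⁻¹ ≤ π ^ 2 / b ^ 3 := by
  have hπ : 0 < π := pi_pos
  calc ∫ θ in (-π)..π, ((b ^ 2 + (1 - cos θ)) ^ 2)⁻¹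
      ≤ ∫ θ in (-π)..π, ((b ^ 2 + (π⁻¹ * θ) ^ 2) ^ 2)⁻¹ := by
        refine intervalIntegral.integral_mono_on (by linarith) ?_ ?_ fun θ hθ => ?_
        · exact (Continuous.inv₀ (by fun_prop) fun θ =>
            pow_ne_zero _ (sq_add_one_sub_cos_pos hb θ).ne').intervalIntegrable _ _
        · exact (Continuous.inv₀ (by fun_prop) fun x => by positivity).intervalIntegrable _ _
        · have hjordan := cos_le_one_sub_mul_cos_sq (abs_le.2 hθ)
          have : (π⁻¹ * θ) ^ 2 ≤ 2 / π ^ 2 * θ ^ 2 := by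
            rw [mul_pow, inv_pow, ← div_eq_inv_mul, div_mul_eq_mul_div]
            gcongr
            linarith [sq_nonneg θ]
          gcongr
          linarith
    _ ≤ π / (π⁻¹ * b ^ 3) := integral_inv_sq_add_mul_sq_le hb (by positivity) (by linarith)
    _ = π ^ 2 / b ^ 3 := by field_simp

lemma setIntegral_Ioo_inv_sq_add_one_sub_cos_sub_le {b : ℝ} (hb : 0 < b) (φ : ℝ) :
    ∫ θ in Set.Ioo (-π) π, ((b ^ 2 + (1 - cos (θ - φ))) ^ 2)⁻¹ ≤ π ^ 2 / b ^ 3 := by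
  set g : ℝ → ℝ := fun θ => ((b ^ 2 + (1 - cos θ)) ^ 2)⁻¹
  have hg : Function.Periodic g (2 * π) := fun θ => by simp [g, cos_add_two_pi]
  have hπ := pi_pos
  calc ∫ θ in Set.Ioo (-π) π, g (θ - φ)
      = ∫ θ in (-π - φ)..(-π - φ + 2 * π), g θ := by
        rw [← integral_Ioc_eq_integral_Ioo, ← intervalIntegral.integral_of_le (by linarith),
          intervalIntegral.integral_comp_sub_right]
        ring_nf
    _ = ∫ θ in (-π)..(-π + 2 * π), g θ := hg.intervalIntegral_add_eq _ _
    _ ≤ π ^ 2 / b ^ 3 := by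
        rw [show -π + 2 * π = π by ring]
        exact integral_inv_sq_add_one_sub_cos_le hb

lemma normSq_one_sub_conj_mul_polarCoord_symm (w : ℂ) (r θ : ℝ) :
    Complex.normSq (1 - (starRingEnd ℂ) w * Complex.polarCoord.symm (r, θ))
      = 1 - 2 * r * ‖w‖ * cos (θ - Complex.arg w) + r ^ 2 * ‖w‖ ^ 2 := by
  have hre : w.re = ‖w‖ * cos (Complex.arg w) := (Complex.norm_mul_cos_arg w).symm
  have him : w.im = ‖w‖ * sin (Complex.arg w) := (Complex.norm_mul_sin_arg w).symm
  simp only [Complex.normSq_apply, Complex.polarCoord_symm_apply, Complex.sub_re,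
    Complex.sub_im, Complex.mul_re, Complex.mul_im, Complex.one_re, Complex.one_im,
    Complex.add_re, Complex.add_im, Complex.ofReal_re, Complex.ofReal_im, Complex.I_re,
    Complex.I_im, Complex.conj_re, Complex.conj_im]
  rw [cos_sub, hre, him]
  linear_combination r ^ 2 * ‖w‖ ^ 2 * (cos (Complex.arg w) ^ 2 + sin (Complex.arg w) ^ 2) *
    sin_sq_add_cos_sq θ + r ^ 2 * ‖w‖ ^ 2 * sin_sq_add_cos_sq (Complex.arg w)

lemma sq_one_sub_add_one_sub_le {a r c : ℝ} (ha0 : 0 ≤ a) (ha1 : a ≤ 1) (hr0 : 0 ≤ r)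
    (hr1 : r ≤ 1) (hc : |c| ≤ 1) :
    (1 - a) ^ 2 + (1 - c) ≤ 12 * (1 - 2 * r * a * c + r ^ 2 * a ^ 2) := by
  rw [abs_le] at hc
  have hexp : 1 - 2 * r * a * c + r ^ 2 * a ^ 2 = (1 - r * a) ^ 2 + 2 * (r * a) * (1 - c) := by
    ring
  rcases le_or_gt (1 / 2 : ℝ) (r * a) with h | h
  · have : (1 - a) ^ 2 ≤ (1 - r * a) ^ 2 :=
      pow_le_pow_left₀ (by linarith) (by nlinarith) 2
    nlinarith
  · nlinarith [mul_nonneg (mul_nonneg hr0 ha0) (by linarith : (0:ℝ) ≤ 1 - c)]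

lemma inv_norm_one_sub_conj_mul_polarCoord_symm_pow_four_le {w : ℂ} (hw : ‖w‖ < 1) {r : ℝ}
    (hr0 : 0 ≤ r) (hr1 : r ≤ 1) (θ : ℝ) :
    ‖1 - (starRingEnd ℂ) w * Complex.polarCoord.symm (r, θ)‖⁻¹ ^ 4
      ≤ 144 * (((1 - ‖w‖) ^ 2 + (1 - cos (θ - Complex.arg w))) ^ 2)⁻¹ := by
  set D := (1 - ‖w‖) ^ 2 + (1 - cos (θ - Complex.arg w))
  have hD : 0 < D := sq_add_one_sub_cos_pos (by linarith) _
  have hDle :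
      D ≤ 12 * Complex.normSq (1 - (starRingEnd ℂ) w * Complex.polarCoord.symm (r, θ)) := by
    rw [normSq_one_sub_conj_mul_polarCoord_symm]
    exact sq_one_sub_add_one_sub_le (norm_nonneg w) hw.le hr0 hr1 (abs_cos_le_one _)
  calc ‖1 - (starRingEnd ℂ) w * Complex.polarCoord.symm (r, θ)‖⁻¹ ^ 4
      = ((Complex.normSq (1 - (starRingEnd ℂ) w * Complex.polarCoord.symm (r, θ))) ^ 2)⁻¹ := by
        rw [inv_pow, ← Complex.sq_norm, ← pow_mul]
    _ ≤ ((D / 12) ^ 2)⁻¹ := by gcongr; linarith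
    _ = 144 * (D ^ 2)⁻¹ := by field_simp; norm_num

lemma setIntegral_annulus_le {f : ℂ → ℝ} {G : ℝ → ℝ} {R : ℝ} (hR0 : 0 ≤ R) (hR1 : R ≤ 1)
    (hf : 0 ≤ f) (hG0 : 0 ≤ G) (hG : IntegrableOn G (Set.Ioo (-π) π))
    (hfG : ∀ r θ, R ≤ r → r < 1 → f (Complex.polarCoord.symm (r, θ)) ≤ G θ) :
    ∫ z in {z : ℂ | R ≤ ‖z‖ ∧ ‖z‖ < 1}, f z ≤ (1 - R ^ 2) / 2 * ∫ θ in Set.Ioo (-π) π, G θ := by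
  set S : Set ℂ := {z : ℂ | R ≤ ‖z‖ ∧ ‖z‖ < 1}
  set F : ℝ → ℝ := (Set.Ico R 1).indicator id
  have hS : MeasurableSet S :=
    (measurableSet_le measurable_const measurable_norm).inter
      (measurableSet_lt measurable_norm measurable_const)
  have hF0 : 0 ≤ F := Set.indicator_nonneg fun r hr => hR0.trans hr.1
  have hF : Integrable F := (integrable_indicator_iff measurableSet_Ico).2
    (continuous_id.integrableOn_Icc.mono_set Set.Ico_subset_Icc_self)
  have hFG : IntegrableOn (fun p : ℝ × ℝ => F p.1 * G p.2) (Set.Ioi 0 ×ˢ Set.Ioo (-π) π) := by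
    rw [IntegrableOn, Measure.volume_eq_prod, ← Measure.prod_restrict]
    exact hF.integrableOn.mul_prod hG
  calc ∫ z in S, f z
      = ∫ p in polarCoord.target, p.1 • S.indicator f (Complex.polarCoord.symm p) := by
        rw [← integral_indicator hS, Complex.integral_comp_polarCoord_symm]
    _ ≤ ∫ p in Set.Ioi 0 ×ˢ Set.Ioo (-π) π, F p.1 * G p.2 := by
        rw [polarCoord_target]
        refine integral_mono_of_nonneg ?_ hFG ?_
        · refine ae_restrict_of_forall_mem (measurableSet_Ioi.prod measurableSet_Ioo) ?_
          exact fun p hp => mul_nonneg (le_of_lt hp.1) (Set.indicator_nonneg (fun z _ => hf z) _)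
        · refine ae_restrict_of_forall_mem (measurableSet_Ioi.prod measurableSet_Ioo) ?_
          rintro ⟨r, θ⟩ ⟨hr : 0 < r, -⟩
          by_cases hrS : Complex.polarCoord.symm (r, θ) ∈ S
          · have hrR : r ∈ Set.Ico R 1 := by
              simpa [S, Complex.norm_polarCoord_symm, abs_of_pos hr] using hrS
            simp only [Set.indicator_of_mem hrS, F, Set.indicator_of_mem hrR, id, smul_eq_mul]
            exact mul_le_mul_of_nonneg_left (hfG r θ hrR.1 hrR.2) hr.le
          · simp only [Set.indicator_of_notMem hrS, smul_zero]
            exact mul_nonneg (hF0 r) (hG0 θ)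
    _ = (∫ r in Set.Ioi 0, F r) * ∫ θ in Set.Ioo (-π) π, G θ := by
        rw [Measure.volume_eq_prod, setIntegral_prod_mul]
    _ ≤ (1 - R ^ 2) / 2 * ∫ θ in Set.Ioo (-π) π, G θ := by
        gcongr
        · exact setIntegral_nonneg measurableSet_Ioo fun θ _ => hG0 θ
        calc ∫ r in Set.Ioi 0, F r ≤ ∫ r, F r :=
            setIntegral_le_integral hF (Filter.Eventually.of_forall hF0)
          _ = (1 - R ^ 2) / 2 := by
            rw [integral_indicator measurableSet_Ico, integral_Ico_eq_integral_Ioo,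
              ← integral_Ioc_eq_integral_Ioo, ← intervalIntegral.integral_of_le hR1]
            simp

theorem stmt7 :
    ∃ C : ℝ, 0 < C ∧ ∀ (w : ℂ) (R : ℝ), ‖w‖ < 1 → 0 ≤ R → R < 1 →
      (∫ z in {z : ℂ | R ≤ ‖z‖ ∧ ‖z‖ < 1},
          (‖1 - (starRingEnd ℂ) w * z‖)⁻¹ ^ 4)
        ≤ C * (1 - R ^ 2) / (1 - ‖w‖ ^ 2) ^ 3 := by
  refine ⟨576 * π ^ 2, by positivity, fun w R hw hR0 hR1 => ?_⟩
  set b := 1 - ‖w‖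
  have hb : 0 < b := by linarith
  set G : ℝ → ℝ := fun θ => 144 * ((b ^ 2 + (1 - cos (θ - Complex.arg w))) ^ 2)⁻¹
  have hG : IntegrableOn G (Set.Ioo (-π) π) :=
    (Continuous.integrableOn_Icc (continuous_const.mul (Continuous.inv₀ (by fun_prop)
      fun θ => pow_ne_zero _ (sq_add_one_sub_cos_pos hb _).ne'))).mono_set
        Set.Ioo_subset_Icc_self
  have hwb : (1 - ‖w‖ ^ 2) ^ 3 ≤ 8 * b ^ 3 := by
    calc (1 - ‖w‖ ^ 2) ^ 3 ≤ (2 * b) ^ 3 :=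
          pow_le_pow_left₀ (by nlinarith [norm_nonneg w]) (by nlinarith [norm_nonneg w]) 3
      _ = 8 * b ^ 3 := by ring
  have hR : 0 ≤ 1 - R ^ 2 := by nlinarith
  calc (∫ z in {z : ℂ | R ≤ ‖z‖ ∧ ‖z‖ < 1}, ‖1 - (starRingEnd ℂ) w * z‖⁻¹ ^ 4)
      ≤ (1 - R ^ 2) / 2 * ∫ θ in Set.Ioo (-π) π, G θ :=
        setIntegral_annulus_le hR0 hR1.le (fun z => by positivity) (fun θ => by positivity) hG
          fun r θ hr hr1 => inv_norm_one_sub_conj_mul_polarCoord_symm_pow_four_le hw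
            (hR0.trans hr) hr1.le θ
    _ ≤ (1 - R ^ 2) / 2 * (144 * (π ^ 2 / b ^ 3)) := by
        rw [integral_const_mul]
        gcongr
        exact setIntegral_Ioo_inv_sq_add_one_sub_cos_sub_le hb _
    _ = 576 * π ^ 2 * (1 - R ^ 2) / (8 * b ^ 3) := by field_simp; ring
    _ ≤ 576 * π ^ 2 * (1 - R ^ 2) / (1 - ‖w‖ ^ 2) ^ 3 := by
        have : 0 < 1 - ‖w‖ ^ 2 := by nlinarith [norm_nonneg w]
        gcongr
end

section
/- For every integer k ≥ 2 there is a constant C_k such that for all z in the open unit disk, ∫_D dA(ζ)/(|z − ζ|·|z − (conj(ζ))⁻¹|^k) ≤ C_k·(1 − |z|²)^{1−k}, where the integral is over the open unit disk D minus the origin (the integrand extended arbitrarily at ζ = 0) with respect to planar Lebesgue measure. -/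
/-!
Since `|z - (conj ζ)⁻¹| = |1 - z conj ζ| / |ζ| ≥ |1 - z conj ζ| ≥ max (|z - ζ|, ρ)` with
`ρ = (1 - |z|²) / 2`, the integrand is dominated by the radial function `1 / (r max (r, ρ) ^ k)`
of `r = |z - ζ|`. In polar coordinates its integral over the whole plane is
`2π ∫₀^∞ max (r, ρ) ^ (-k) dr = 2π k / (k - 1) ρ ^ (1 - k)`.
-/

open MeasureTheory Set ComplexConjugate

namespace Complex

lemma norm_sub_inv_conj (z : ℂ) {ζ : ℂ} (hζ : ζ ≠ 0) :
    ‖z - (conj ζ)⁻¹‖ = ‖1 - z * conj ζ‖ / ‖ζ‖ := by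
  have hζ' : conj ζ ≠ 0 := (map_ne_zero _).2 hζ
  rw [show z - (conj ζ)⁻¹ = -(1 - z * conj ζ) / conj ζ by field_simp; ring,
    norm_div, norm_neg, norm_conj]

lemma normSq_one_sub_mul_conj_sub_normSq_sub (z ζ : ℂ) :
    normSq (1 - z * conj ζ) - normSq (z - ζ) = (1 - normSq z) * (1 - normSq ζ) := by
  simp only [normSq_apply, sub_re, sub_im, mul_re, mul_im, one_re, one_im, conj_re, conj_im]
  ring

lemma norm_sub_le_norm_one_sub_mul_conj {z ζ : ℂ} (hz : ‖z‖ ≤ 1) (hζ : ‖ζ‖ ≤ 1) :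
    ‖z - ζ‖ ≤ ‖1 - z * conj ζ‖ := by
  have h := normSq_one_sub_mul_conj_sub_normSq_sub z ζ
  rw [← sq_le_sq₀ (norm_nonneg _) (norm_nonneg _), ← normSq_eq_norm_sq, ← normSq_eq_norm_sq]
  have hz' : normSq z ≤ 1 := by rw [normSq_eq_norm_sq]; nlinarith [norm_nonneg z]
  have hζ' : normSq ζ ≤ 1 := by rw [normSq_eq_norm_sq]; nlinarith [norm_nonneg ζ]
  nlinarith [mul_nonneg (sub_nonneg.2 hz') (sub_nonneg.2 hζ')]

lemma one_sub_norm_le_norm_one_sub_mul_conj (z : ℂ) {ζ : ℂ} (hζ : ‖ζ‖ ≤ 1) :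
    1 - ‖z‖ ≤ ‖1 - z * conj ζ‖ := by
  calc 1 - ‖z‖ ≤ 1 - ‖z * conj ζ‖ := by
        rw [norm_mul, norm_conj]
        nlinarith [norm_nonneg z]
    _ ≤ ‖1 - z * conj ζ‖ := by simpa using norm_sub_norm_le (1 : ℂ) (z * conj ζ)

lemma max_norm_sub_le_norm_sub_inv_conj {z ζ : ℂ} (hz : ‖z‖ < 1) (hζ : ‖ζ‖ < 1)
    (hζ0 : ζ ≠ 0) : max ‖z - ζ‖ ((1 - ‖z‖ ^ 2) / 2) ≤ ‖z - (conj ζ)⁻¹‖ := by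
  calc max ‖z - ζ‖ ((1 - ‖z‖ ^ 2) / 2) ≤ ‖1 - z * conj ζ‖ := by
        refine max_le (norm_sub_le_norm_one_sub_mul_conj hz.le hζ.le) ?_
        have := one_sub_norm_le_norm_one_sub_mul_conj z hζ.le
        nlinarith [norm_nonneg z]
    _ ≤ ‖1 - z * conj ζ‖ / ‖ζ‖ := le_div_self (norm_nonneg _) (norm_pos_iff.2 hζ0) hζ.le
    _ = ‖z - (conj ζ)⁻¹‖ := (norm_sub_inv_conj z hζ0).symm

lemma one_div_norm_sub_mul_norm_sub_inv_conj_pow_le {z ζ : ℂ} (hz : ‖z‖ < 1) (hζ : ‖ζ‖ < 1)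
    (hζ0 : ζ ≠ 0) (k : ℕ) :
    1 / (‖z - ζ‖ * ‖z - (conj ζ)⁻¹‖ ^ k) ≤
      1 / (‖z - ζ‖ * max ‖z - ζ‖ ((1 - ‖z‖ ^ 2) / 2) ^ k) := by
  rcases (norm_nonneg (z - ζ)).eq_or_lt with ha | ha
  · -- at `ζ = z` both sides are `1 / 0 = 0`
    simp [← ha]
  · have hle := max_norm_sub_le_norm_sub_inv_conj hz hζ hζ0
    have hpos : 0 < max ‖z - ζ‖ ((1 - ‖z‖ ^ 2) / 2) := lt_max_of_lt_left ha
    gcongr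

end Complex

section Radial

variable {ρ : ℝ} {k : ℕ}

lemma inv_max_pow_eqOn_Ioi (hρ : 0 < ρ) :
    EqOn (fun r : ℝ => (max r ρ ^ k)⁻¹) (fun r => r ^ (-(k : ℝ))) (Ioi ρ) := fun r hr => by
  have hr : ρ < r := hr
  simp [max_eq_left hr.le, Real.rpow_neg (hρ.trans hr).le]

lemma integrableOn_Ioi_inv_max_pow (hρ : 0 < ρ) (hk : 1 < k) :
    IntegrableOn (fun r : ℝ => (max r ρ ^ k)⁻¹) (Ioi 0) := by
  rw [← Ioc_union_Ioi_eq_Ioi hρ.le]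
  refine IntegrableOn.union ?_ ?_
  · refine (integrableOn_const (measure_Ioc_lt_top.ne) (C := (ρ ^ k)⁻¹)).congr_fun
      (fun r hr => ?_) measurableSet_Ioc
    simp [max_eq_right hr.2]
  · refine (integrableOn_Ioi_rpow_of_lt ?_ hρ).congr_fun (inv_max_pow_eqOn_Ioi hρ).symm
      measurableSet_Ioi
    have : (1 : ℝ) < k := by exact_mod_cast hk
    linarith

lemma integral_Ioi_inv_max_pow (hρ : 0 < ρ) (hk : 1 < k) :
    ∫ r in Ioi 0, (max r ρ ^ k)⁻¹ = k / (k - 1) * ρ ^ (1 - k : ℤ) := by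
  have hk' : (1 : ℝ) < k := by exact_mod_cast hk
  have hint := integrableOn_Ioi_inv_max_pow hρ hk
  rw [← Ioc_union_Ioi_eq_Ioi hρ.le] at hint ⊢
  rw [setIntegral_union Ioc_disjoint_Ioi_same measurableSet_Ioi
      (hint.mono_set subset_union_left) (hint.mono_set subset_union_right),
    setIntegral_congr_fun measurableSet_Ioc (g := fun _ => (ρ ^ k)⁻¹)
      (fun r hr => by simp [max_eq_right hr.2]),
    setIntegral_congr_fun measurableSet_Ioi (inv_max_pow_eqOn_Ioi hρ),
    setIntegral_const, integral_Ioi_rpow_of_lt (by linarith) hρ]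
  have hpow : ρ ^ (-(k : ℝ) + 1) = ρ ^ (1 - k : ℤ) := by
    rw [← Real.rpow_intCast]; push_cast; ring_nf
  have hconst : ρ * (ρ ^ k)⁻¹ = ρ ^ (1 - k : ℤ) := by
    rw [zpow_sub₀ hρ.ne', zpow_one, zpow_natCast, div_eq_mul_inv]
  simp only [Real.volume_real_Ioc_of_le hρ.le, sub_zero, smul_eq_mul, hconst, hpow]
  field_simp [(by linarith : (k : ℝ) - 1 ≠ 0), (by linarith : -(k : ℝ) + 1 ≠ 0)]
  ring

lemma pow_finrank_smul_one_div_mul_max_pow_eqOn :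
    EqOn (fun r : ℝ => r ^ (Module.finrank ℝ ℂ - 1) • (1 / (r * max r ρ ^ k)))
      (fun r => (max r ρ ^ k)⁻¹) (Ioi 0) := fun r (hr : 0 < r) => by
  simp only [Complex.finrank_real_complex, Nat.add_one_sub_one, pow_one, one_div, mul_inv_rev,
    smul_eq_mul]
  field_simp

lemma integrable_one_div_norm_mul_max_pow (hρ : 0 < ρ) (hk : 1 < k) :
    Integrable (fun ζ : ℂ => 1 / (‖ζ‖ * max ‖ζ‖ ρ ^ k)) := by
  rw [integrable_fun_norm_addHaar volume (f := fun r => 1 / (r * max r ρ ^ k))]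
  exact (integrableOn_Ioi_inv_max_pow hρ hk).congr_fun
    pow_finrank_smul_one_div_mul_max_pow_eqOn.symm measurableSet_Ioi

lemma integral_one_div_norm_mul_max_pow (hρ : 0 < ρ) (hk : 1 < k) :
    ∫ ζ : ℂ, 1 / (‖ζ‖ * max ‖ζ‖ ρ ^ k) = 2 * Real.pi * (k / (k - 1)) * ρ ^ (1 - k : ℤ) := by
  rw [integral_fun_norm_addHaar volume (fun r => 1 / (r * max r ρ ^ k)),
    setIntegral_congr_fun measurableSet_Ioi pow_finrank_smul_one_div_mul_max_pow_eqOn,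
    integral_Ioi_inv_max_pow hρ hk]
  simp only [Complex.finrank_real_complex, measureReal_def, Complex.volume_ball,
    ENNReal.ofReal_one, one_pow, one_mul, ENNReal.coe_toReal, NNReal.coe_real_pi, smul_eq_mul,
    nsmul_eq_mul, Nat.cast_ofNat]
  ring

end Radial

theorem stmt9 (k : ℕ) (hk : 2 ≤ k) :
    ∃ C : ℝ, 0 < C ∧ ∀ z : ℂ, ‖z‖ < 1 →
      (∫ ζ in Metric.ball (0 : ℂ) 1,
          1 / (‖z - ζ‖ * ‖z - ((starRingEnd ℂ) ζ)⁻¹‖ ^ k))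
        ≤ C * (1 - ‖z‖ ^ 2) ^ ((1 : ℤ) - k) := by
  have hk' : (1 : ℝ) < k := by exact_mod_cast hk
  refine ⟨2 * Real.pi * (k / (k - 1)) * 2 ^ ((k : ℤ) - 1),
    mul_pos (mul_pos (by positivity) (div_pos (by positivity) (by linarith))) (by positivity),
    fun z hz => ?_⟩
  set ρ := (1 - ‖z‖ ^ 2) / 2
  have hρ : 0 < ρ := div_pos (by nlinarith [norm_nonneg z]) two_pos
  set G := fun ζ : ℂ => 1 / (‖ζ‖ * max ‖ζ‖ ρ ^ k)
  have hG : Integrable fun ζ => G (z - ζ) :=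
    (integrable_one_div_norm_mul_max_pow hρ hk).comp_sub_left z
  have hG0 : 0 ≤ fun ζ => G (z - ζ) := fun ζ => by positivity
  calc (∫ ζ in Metric.ball (0 : ℂ) 1, 1 / (‖z - ζ‖ * ‖z - (conj ζ)⁻¹‖ ^ k))
      ≤ ∫ ζ in Metric.ball (0 : ℂ) 1, G (z - ζ) := by
        refine integral_mono_of_nonneg (.of_forall fun ζ => by positivity) hG.integrableOn ?_
        filter_upwards [ae_restrict_mem measurableSet_ball,
          ae_restrict_of_ae (Measure.ae_ne volume 0)] with ζ hζ hζ0
        exact Complex.one_div_norm_sub_mul_norm_sub_inv_conj_pow_le hz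
          (mem_ball_zero_iff.1 hζ) hζ0 k
    _ ≤ ∫ ζ, G (z - ζ) := setIntegral_le_integral hG (.of_forall hG0)
    _ = ∫ ζ, G ζ := integral_sub_left_eq_self G volume z
    _ = 2 * Real.pi * (k / (k - 1)) * ρ ^ (1 - k : ℤ) := integral_one_div_norm_mul_max_pow hρ hk
    _ = 2 * Real.pi * (k / (k - 1)) * 2 ^ ((k : ℤ) - 1) * (1 - ‖z‖ ^ 2) ^ ((1 : ℤ) - k) := by
        rw [div_zpow, show (k : ℤ) - 1 = -(1 - k) by ring, zpow_neg]
        ring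
end

section
/- Let w ∈ ℂ, r > 0, D_w the open disk of radius r centered at w, k ≥ 1 an integer, and let F : ℂ → ℂ be defined by F(t) = (conj(t) − conj(w))^{k+1}/((k+1)(t − w)^{k−1}) for t ∈ D_w \ {w} (F(w)=0 when k ≥ 2, F(w)=0 by continuity when k=1), and F(t) = r^{2k+2}/((k+1)(t − w)^{2k}) for t outside D_w. Then F is continuous on ℂ, F(t) → 0 as |t| → ∞, and on D_w \ {w} the Wirtinger derivative ∂F/∂conj(t) equals (conj(t) − conj(w))^k/(t − w)^{k−1}. -/
/-!
Write `z = t - w`. Inside the disk, `F = conj z ^ (k + 1) * h` with `h = ((k + 1) z ^ (k - 1))⁻¹`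
holomorphic away from `w`, so `∂F/∂z̄ = (k + 1) conj z ^ k * h`. On the circle `‖z‖ = r` we have
`conj z = r ^ 2 / z`, so the inner and outer formulas agree there and `F` is continuous; at `w`
itself `‖F‖ = ‖z‖ ^ 2 / (k + 1)`, and outside the disk `F = O(‖z‖ ^ (-2k))`.
-/

open Complex ComplexConjugate Filter Topology

/-- The Wirtinger derivative `∂f/∂z̄` at `t`. -/
noncomputable def dbar (f : ℂ → ℂ) (t : ℂ) : ℂ :=
  (1 / 2 : ℂ) * (fderiv ℝ f t 1 + I * fderiv ℝ f t I)

theorem HasFDerivAt.dbar_eq {f : ℂ → ℂ} {L : ℂ →L[ℝ] ℂ} {t : ℂ} (hf : HasFDerivAt f L t) :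
    dbar f t = (1 / 2 : ℂ) * (L 1 + I * L I) := by
  rw [dbar, hf.fderiv]

theorem Filter.EventuallyEq.dbar_eq {f g : ℂ → ℂ} {t : ℂ} (h : f =ᶠ[𝓝 t] g) :
    dbar f t = dbar g t := by
  rw [dbar, dbar, h.fderiv_eq]

theorem HasDerivAt.hasFDerivAt_restrictScalars {h : ℂ → ℂ} {h' t : ℂ} (hh : HasDerivAt h h' t) :
    HasFDerivAt h ((ContinuousLinearMap.toSpanSingleton ℂ h').restrictScalars ℝ) t :=
  hh.hasFDerivAt.restrictScalars ℝ

theorem HasDerivAt.dbar_conj {h : ℂ → ℂ} {h' t : ℂ} (hh : HasDerivAt h h' t) :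
    dbar (fun s => conj (h s)) t = conj h' := by
  refine hh.hasFDerivAt_restrictScalars.star.dbar_eq.trans ?_
  simp only [ContinuousLinearMap.comp_apply, ContinuousLinearMap.coe_restrictScalars',
    ContinuousLinearMap.toSpanSingleton_apply, smul_eq_mul, ContinuousLinearEquiv.coe_coe,
    starL'_apply, RCLike.star_def, map_mul, conj_I, map_one]
  linear_combination (-conj h' / 2) * I_sq

theorem dbar_mul_of_differentiableAt {f g : ℂ → ℂ} {t : ℂ} (hf : DifferentiableAt ℝ f t)
    (hg : DifferentiableAt ℂ g t) : dbar (fun s => f s * g s) t = dbar f t * g t := by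
  rw [(hf.hasFDerivAt.fun_mul hg.hasDerivAt.hasFDerivAt_restrictScalars).dbar_eq, dbar]
  simp only [add_apply, smul_apply, ContinuousLinearMap.coe_restrictScalars',
    ContinuousLinearMap.toSpanSingleton_apply, smul_eq_mul]
  linear_combination (f t * deriv g t / 2) * I_sq

theorem norm_conj_pow_div_pow {m n : ℕ} (h : m < n) (z : ℂ) :
    ‖conj z ^ n / z ^ m‖ = ‖z‖ ^ (n - m) := by
  rcases eq_or_ne z 0 with rfl | hz
  · simp [zero_pow (Nat.sub_ne_zero_of_lt h), zero_pow (Nat.ne_zero_of_lt h)]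
  · rw [norm_div, norm_pow, norm_pow, norm_conj, pow_sub₀ _ (norm_ne_zero_iff.2 hz) h.le,
      div_eq_mul_inv]

theorem continuous_conj_pow_div_pow {m n : ℕ} (h : m < n) :
    Continuous fun z : ℂ => conj z ^ n / z ^ m := by
  refine continuous_iff_continuousAt.2 fun z => ?_
  rcases eq_or_ne z 0 with rfl | hz
  · have h0 : Tendsto (fun z : ℂ => ‖z‖ ^ (n - m)) (𝓝 0) (𝓝 0) :=
      (continuous_norm.pow _).tendsto' 0 0 (by simp [Nat.sub_ne_zero_of_lt h])
    rw [ContinuousAt, map_zero, zero_pow (Nat.ne_zero_of_lt h), zero_div,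
      tendsto_zero_iff_norm_tendsto_zero]
    simpa only [norm_conj_pow_div_pow h] using h0
  · exact ((continuous_conj.pow n).continuousAt).div (continuous_pow m).continuousAt
      (pow_ne_zero m hz)

theorem continuous_conj_sub_pow_div {k : ℕ} (hk : 1 ≤ k) (c w : ℂ) :
    Continuous fun t => (conj t - conj w) ^ (k + 1) / (c * (t - w) ^ (k - 1)) := by
  have h := ((continuous_conj_pow_div_pow (by omega : k - 1 < k + 1)).comp
    (continuous_sub_right w)).div_const c
  refine h.congr fun t => ?_
  simp only [Function.comp_apply, map_sub, div_div, mul_comm]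

theorem conj_eq_sq_mul_inv_of_norm_eq {z : ℂ} {r : ℝ} (hz : ‖z‖ = r) : conj z = r ^ 2 * z⁻¹ := by
  rcases eq_or_ne z 0 with rfl | hz0
  · simp
  · rw [← hz, ← conj_mul', mul_assoc, mul_inv_cancel₀ hz0, mul_one]

theorem conj_pow_succ_div_eq_of_norm_eq {z c : ℂ} {r : ℝ} (hz : ‖z‖ = r) {k : ℕ} (hk : 1 ≤ k) :
    conj z ^ (k + 1) / (c * z ^ (k - 1)) = ((r ^ (2 * k + 2) : ℝ) : ℂ) / (c * z ^ (2 * k)) := by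
  obtain ⟨n, rfl⟩ := Nat.exists_eq_add_of_le' hk
  rw [conj_eq_sq_mul_inv_of_norm_eq hz, Nat.add_sub_cancel]
  push_cast
  ring

theorem tendsto_div_mul_sub_pow_cocompact (a : ℂ) {c : ℂ} (hc : c ≠ 0) (w : ℂ) {m : ℕ}
    (hm : m ≠ 0) : Tendsto (fun t => a / (c * (t - w) ^ m)) (cocompact ℂ) (𝓝 0) := by
  rw [← Metric.cobounded_eq_cocompact]
  have h := tendsto_inv₀_cobounded.comp <| (tendsto_mul_left_cobounded hc).comp <|
    (tendsto_pow_cobounded_cobounded hm).comp (tendsto_sub_const_cobounded w)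
  simpa only [Function.comp_def, div_eq_mul_inv, mul_zero] using h.const_mul a

/-- The Cauchy transform of `(conj t - conj w) ^ k / (t - w) ^ (k - 1)` times the indicator of
the disk `‖t - w‖ < r`. -/
noncomputable def diskKernelCauchyTransform (w : ℂ) (r : ℝ) (k : ℕ) (t : ℂ) : ℂ :=
  if ‖t - w‖ < r then (conj t - conj w) ^ (k + 1) / (((k : ℂ) + 1) * (t - w) ^ (k - 1))
  else ((r ^ (2 * k + 2) : ℝ) : ℂ) / (((k : ℂ) + 1) * (t - w) ^ (2 * k))

namespace diskKernelCauchyTransform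

variable {w : ℂ} {r : ℝ} {k : ℕ}

theorem continuous (hr : 0 < r) (hk : 1 ≤ k) : Continuous (diskKernelCauchyTransform w r k) := by
  have hc : (k : ℂ) + 1 ≠ 0 := Nat.cast_add_one_ne_zero k
  have hswap : diskKernelCauchyTransform w r k = fun t => if r ≤ ‖t - w‖ then
      ((r ^ (2 * k + 2) : ℝ) : ℂ) / (((k : ℂ) + 1) * (t - w) ^ (2 * k))
      else (conj t - conj w) ^ (k + 1) / (((k : ℂ) + 1) * (t - w) ^ (k - 1)) := by
    funext t
    simp only [diskKernelCauchyTransform, ← not_lt, ite_not]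
  rw [hswap]
  refine continuous_if_le continuous_const (by fun_prop) (fun t ht => ?_)
    (continuous_conj_sub_pow_div hk _ w).continuousOn fun t ht => ?_
  · have htw : t - w ≠ 0 := norm_pos_iff.1 (hr.trans_le ht)
    fun_prop (disch := exact mul_ne_zero hc (pow_ne_zero _ htw))
  · rw [← map_sub, conj_pow_succ_div_eq_of_norm_eq ht.symm hk]

theorem tendsto_cocompact (hk : 1 ≤ k) :
    Tendsto (diskKernelCauchyTransform w r k) (cocompact ℂ) (𝓝 0) := by
  refine (tendsto_div_mul_sub_pow_cocompact ((r ^ (2 * k + 2) : ℝ) : ℂ)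
    (Nat.cast_add_one_ne_zero k) w (m := 2 * k) (by omega)).congr' ?_
  filter_upwards [(tendsto_dist_right_cocompact_atTop w).eventually_ge_atTop r] with s hs
  rw [diskKernelCauchyTransform, if_neg (not_lt.2 (by rwa [← dist_eq_norm]))]

theorem differentiableAt_and_dbar_eq {t : ℂ} (htr : ‖t - w‖ < r) (htw : t ≠ w) :
    DifferentiableAt ℝ (diskKernelCauchyTransform w r k) t ∧
      dbar (diskKernelCauchyTransform w r k) t = (conj t - conj w) ^ k / (t - w) ^ (k - 1) := by
  have hev : diskKernelCauchyTransform w r k =ᶠ[𝓝 t]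
      fun s => conj ((s - w) ^ (k + 1)) * (((k : ℂ) + 1) * (s - w) ^ (k - 1))⁻¹ := by
    have hball : IsOpen {s : ℂ | ‖s - w‖ < r} := isOpen_lt (by fun_prop) continuous_const
    filter_upwards [hball.mem_nhds htr] with s hs
    rw [diskKernelCauchyTransform, if_pos hs, map_pow, map_sub, div_eq_mul_inv]
  have hpow : HasDerivAt (fun s => (s - w) ^ (k + 1)) (((k : ℂ) + 1) * (t - w) ^ k) t := by
    simpa using ((hasDerivAt_id t).sub_const w).fun_pow (k + 1)
  have hconj : DifferentiableAt ℝ (fun s => conj ((s - w) ^ (k + 1))) t :=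
    hpow.hasFDerivAt_restrictScalars.star.differentiableAt
  have hden : ((k : ℂ) + 1) * (t - w) ^ (k - 1) ≠ 0 :=
    mul_ne_zero (Nat.cast_add_one_ne_zero k) (pow_ne_zero _ (sub_ne_zero.2 htw))
  have hg : DifferentiableAt ℂ (fun s => (((k : ℂ) + 1) * (s - w) ^ (k - 1))⁻¹) t := by
    fun_prop (disch := exact hden)
  refine ⟨(hconj.mul (hg.restrictScalars ℝ)).congr_of_eventuallyEq hev, ?_⟩
  rw [hev.dbar_eq, dbar_mul_of_differentiableAt hconj hg, hpow.dbar_conj]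
  simp only [map_mul, map_add, map_pow, map_sub, map_natCast, map_one]
  field_simp

end diskKernelCauchyTransform

theorem stmt12 (w : ℂ) (r : ℝ) (hr : 0 < r) (k : ℕ) (hk : 1 ≤ k) (F : ℂ → ℂ)
    (hF : ∀ t : ℂ, F t =
      if ‖t - w‖ < r then
        ((starRingEnd ℂ) t - (starRingEnd ℂ) w) ^ (k + 1) / (((k : ℂ) + 1) * (t - w) ^ (k - 1))
      else ((r ^ (2 * k + 2) : ℝ) : ℂ) / (((k : ℂ) + 1) * (t - w) ^ (2 * k))) :
    Continuous F ∧ Filter.Tendsto F (Filter.cocompact ℂ) (nhds 0) ∧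
      ∀ t : ℂ, ‖t - w‖ < r → t ≠ w →
        DifferentiableAt ℝ F t ∧
          (1 / 2 : ℂ) * (fderiv ℝ F t 1 + Complex.I * fderiv ℝ F t Complex.I)
            = ((starRingEnd ℂ) t - (starRingEnd ℂ) w) ^ k / (t - w) ^ (k - 1) := by
  obtain rfl : F = diskKernelCauchyTransform w r k := funext hF
  exact ⟨diskKernelCauchyTransform.continuous hr hk, diskKernelCauchyTransform.tendsto_cocompact hk,
    fun t htr htw => diskKernelCauchyTransform.differentiableAt_and_dbar_eq htr htw⟩
end

section
/- Let μ₁, μ₂ : ℂ → ℂ be measurable with compact support, ‖μᵢ‖_∞ ≤ d < 1, and let p > 2 be such that the Neumann series (Id − μᵢ S)⁻¹ converges in L^p(ℂ), where S is the Beurling transform. Let hᵢ ∈ L^p(ℂ) be the unique solutions of hᵢ − S(μᵢ hᵢ) = S(μᵢ). Then ‖h₁ − h₂‖_p ≤ C_p · ‖(μ₁ − μ₂)(1 + |h₂|)‖_p for a constant C_p depending only on p and d, where one uses h₁ − h₂ = (Id − μ₁S)⁻¹ S((μ₁ − μ₂)(1 + h₂)). -/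
open MeasureTheory
open scoped ENNReal

/-!
Subtracting the two Beltrami-type equations gives
`h₁ - h₂ = S (μ₁ (h₁ - h₂)) + S ((μ₁ - μ₂) (1 + h₂))`.
Multiplication by `μ₁` has norm at most `d` on `Lp`, so the first term is at most
`d ‖S‖ ‖h₁ - h₂‖` and can be absorbed into the left-hand side since `d ‖S‖ < 1`, leaving
`‖h₁ - h₂‖ ≤ ‖S‖ / (1 - d ‖S‖) · ‖(μ₁ - μ₂) (1 + h₂)‖_p`.
-/

theorem ContinuousLinearMap.norm_le_of_eq_apply_add {𝕜 E F : Type*} [NontriviallyNormedField 𝕜]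
    [SeminormedAddCommGroup E] [NormedSpace 𝕜 E] [SeminormedAddCommGroup F] [NormedSpace 𝕜 F]
    (S : E →L[𝕜] F) {x : F} {u g : E} {d : ℝ} (hd : d * ‖S‖ < 1) (hu : ‖u‖ ≤ d * ‖x‖)
    (hx : x = S (u + g)) : ‖x‖ ≤ ‖S‖ / (1 - d * ‖S‖) * ‖g‖ := by
  have hx' : ‖x‖ ≤ ‖S‖ * (d * ‖x‖) + ‖S‖ * ‖g‖ :=
    calc ‖x‖ ≤ ‖S‖ * ‖u + g‖ := hx ▸ S.le_opNorm _
      _ ≤ ‖S‖ * (d * ‖x‖ + ‖g‖) := by gcongr; exact (norm_add_le u g).trans (by gcongr)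
      _ = ‖S‖ * (d * ‖x‖) + ‖S‖ * ‖g‖ := mul_add _ _ _
  rw [div_mul_eq_mul_div, le_div_iff₀ (by linarith)]
  linarith

theorem sub_eq_apply_add_of_sub_apply_eq {E F : Type*} [AddCommGroup E] [FunLike F E E]
    [AddMonoidHomClass F E E] {S M₁ M₂ : F} {a₁ a₂ h₁ h₂ : E}
    (e₁ : h₁ - S (M₁ h₁) = S a₁) (e₂ : h₂ - S (M₂ h₂) = S a₂) :
    h₁ - h₂ = S (M₁ (h₁ - h₂) + (M₁ h₂ - M₂ h₂ + (a₁ - a₂))) := by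
  have e₁' : S (M₁ h₁) = h₁ - S a₁ := by rw [← e₁]; abel
  have e₂' : S (M₂ h₂) = h₂ - S a₂ := by rw [← e₂]; abel
  simp only [map_add, map_sub, e₁', e₂']
  abel

namespace MeasureTheory

variable {α : Type*} [MeasurableSpace α] {μ : Measure α} {p : ℝ≥0∞}

theorem MemLp.norm_mul_one_add_norm {E F : Type*} [NormedAddCommGroup E] [NormedAddCommGroup F]
    {f : α → E} {g : α → F} {c : ℝ} (hf : MemLp f p μ) (hfc : ∀ᵐ x ∂μ, ‖f x‖ ≤ c)
    (hg : MemLp g p μ) : MemLp (fun x => ‖f x‖ * (1 + ‖g x‖)) p μ := by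
  refine (hf.norm.add (hg.norm.const_mul c)).mono'
    (hf.aestronglyMeasurable.norm.mul (aestronglyMeasurable_const.add hg.1.norm)) ?_
  filter_upwards [hfc] with x hx
  rw [Real.norm_of_nonneg (by positivity), mul_one_add]
  simp only [Pi.add_apply]
  gcongr

theorem Lp.norm_le_mul_norm_of_ae_eq_mul {R : Type*} [NormedRing R] {m : α → R} {c : ℝ}
    (hm : ∀ᵐ x ∂μ, ‖m x‖ ≤ c) {f g : Lp R p μ} (hfg : f =ᵐ[μ] fun x => m x * g x) :
    ‖f‖ ≤ c * ‖g‖ := by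
  refine Lp.norm_le_mul_norm_of_ae_le_mul ?_
  filter_upwards [hm, hfg] with x hx hfx
  rw [hfx]
  exact (norm_mul_le _ _).trans (by gcongr)

theorem Lp.norm_le_toReal_eLpNorm_of_ae_le {E : Type*} [NormedAddCommGroup E] {f : Lp E p μ}
    {F : α → ℝ} (hF : MemLp F p μ) (h : ∀ᵐ x ∂μ, ‖f x‖ ≤ F x) :
    ‖f‖ ≤ (eLpNorm F p μ).toReal :=
  ENNReal.toReal_mono hF.eLpNorm_ne_top (eLpNorm_mono_ae_real h)

theorem Lp.norm_sub_add_toLp_sub_le {m₁ m₂ : α → ℂ} (hm₁ : MemLp m₁ p μ) (hm₂ : MemLp m₂ p μ)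
    {c : ℝ} (hc : ∀ᵐ x ∂μ, ‖m₁ x - m₂ x‖ ≤ c) {f₁ f₂ h : Lp ℂ p μ}
    (hf₁ : f₁ =ᵐ[μ] fun x => m₁ x * h x) (hf₂ : f₂ =ᵐ[μ] fun x => m₂ x * h x) :
    ‖f₁ - f₂ + (hm₁.toLp m₁ - hm₂.toLp m₂)‖ ≤
      (eLpNorm (fun x => ‖m₁ x - m₂ x‖ * (1 + ‖h x‖)) p μ).toReal := by
  refine Lp.norm_le_toReal_eLpNorm_of_ae_le ((hm₁.sub hm₂).norm_mul_one_add_norm hc (Lp.memLp h)) ?_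
  filter_upwards [Lp.coeFn_add (f₁ - f₂) (hm₁.toLp m₁ - hm₂.toLp m₂), Lp.coeFn_sub f₁ f₂,
    Lp.coeFn_sub (hm₁.toLp m₁) (hm₂.toLp m₂), hf₁, hf₂, hm₁.coeFn_toLp, hm₂.coeFn_toLp]
    with x e₁ e₂ e₃ e₄ e₅ e₆ e₇
  have hx : (f₁ - f₂ + (hm₁.toLp m₁ - hm₂.toLp m₂) : Lp ℂ p μ) x = (m₁ x - m₂ x) * (1 + h x) := by
    rw [e₁, Pi.add_apply, e₂, e₃, Pi.sub_apply, Pi.sub_apply, e₄, e₅, e₆, e₇]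
    ring
  rw [hx, norm_mul]
  gcongr
  exact (norm_add_le _ _).trans_eq (by rw [norm_one])

end MeasureTheory

theorem stmt16_general (p : ℝ≥0∞) [Fact (1 ≤ p)]
    (d : ℝ)
    (S : Lp ℂ p (volume : Measure ℂ) →L[ℂ] Lp ℂ p (volume : Measure ℂ))
    (hNeum : d * ‖S‖ < 1) :
    ∃ C : ℝ, 0 < C ∧
      ∀ (μ₁ μ₂ : ℂ → ℂ) (hμ₁ : MemLp μ₁ p (volume : Measure ℂ))
        (hμ₂ : MemLp μ₂ p (volume : Measure ℂ))
        (M₁ M₂ : Lp ℂ p (volume : Measure ℂ) →L[ℂ] Lp ℂ p (volume : Measure ℂ))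
        (h₁ h₂ : Lp ℂ p (volume : Measure ℂ)),
        HasCompactSupport μ₁ → HasCompactSupport μ₂ →
        (∀ᵐ z : ℂ ∂volume, ‖μ₁ z‖ ≤ d) → (∀ᵐ z : ℂ ∂volume, ‖μ₂ z‖ ≤ d) →
        (∀ g : Lp ℂ p (volume : Measure ℂ),
          (M₁ g : ℂ → ℂ) =ᵐ[volume] fun z => μ₁ z * g z) →
        (∀ g : Lp ℂ p (volume : Measure ℂ),
          (M₂ g : ℂ → ℂ) =ᵐ[volume] fun z => μ₂ z * g z) →
        h₁ - S (M₁ h₁) = S (hμ₁.toLp μ₁) →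
        h₂ - S (M₂ h₂) = S (hμ₂.toLp μ₂) →
        ‖h₁ - h₂‖ ≤ C *
          (eLpNorm (fun z => ‖μ₁ z - μ₂ z‖ * (1 + ‖(h₂ : ℂ → ℂ) z‖)) p
            (volume : Measure ℂ)).toReal := by
  have hden : 0 < 1 - d * ‖S‖ := sub_pos.mpr hNeum
  refine ⟨(‖S‖ + 1) / (1 - d * ‖S‖), by positivity, ?_⟩
  intro μ₁ μ₂ hμ₁ hμ₂ M₁ M₂ h₁ h₂ _ _ hμ₁d hμ₂d hM₁ hM₂ heq₁ heq₂
  have hμd : ∀ᵐ z : ℂ ∂volume, ‖μ₁ z - μ₂ z‖ ≤ d + d := by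
    filter_upwards [hμ₁d, hμ₂d] with z hz₁ hz₂
    exact (norm_sub_le _ _).trans (add_le_add hz₁ hz₂)
  have hsource := Lp.norm_sub_add_toLp_sub_le hμ₁ hμ₂ hμd (hM₁ h₂) (hM₂ h₂)
  calc ‖h₁ - h₂‖ ≤ ‖S‖ / (1 - d * ‖S‖) * ‖M₁ h₂ - M₂ h₂ + (hμ₁.toLp μ₁ - hμ₂.toLp μ₂)‖ :=
        S.norm_le_of_eq_apply_add hNeum (Lp.norm_le_mul_norm_of_ae_eq_mul hμ₁d (hM₁ (h₁ - h₂)))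
          (sub_eq_apply_add_of_sub_apply_eq heq₁ heq₂)
    _ ≤ _ := mul_le_mul (by gcongr; linarith) hsource (norm_nonneg _) (by positivity)

theorem stmt16 (p : ℝ≥0∞) [Fact (1 ≤ p)] (hp2 : 2 < p) (hptop : p ≠ ⊤)
    (d : ℝ) (hd0 : 0 ≤ d) (hd1 : d < 1)
    (S : Lp ℂ p (volume : Measure ℂ) →L[ℂ] Lp ℂ p (volume : Measure ℂ))
    (hNeum : d * ‖S‖ < 1) :
    ∃ C : ℝ, 0 < C ∧
      ∀ (μ₁ μ₂ : ℂ → ℂ) (hμ₁ : MemLp μ₁ p (volume : Measure ℂ))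
        (hμ₂ : MemLp μ₂ p (volume : Measure ℂ))
        (M₁ M₂ : Lp ℂ p (volume : Measure ℂ) →L[ℂ] Lp ℂ p (volume : Measure ℂ))
        (h₁ h₂ : Lp ℂ p (volume : Measure ℂ)),
        HasCompactSupport μ₁ → HasCompactSupport μ₂ →
        (∀ᵐ z : ℂ ∂volume, ‖μ₁ z‖ ≤ d) → (∀ᵐ z : ℂ ∂volume, ‖μ₂ z‖ ≤ d) →
        (∀ g : Lp ℂ p (volume : Measure ℂ),
          (M₁ g : ℂ → ℂ) =ᵐ[volume] fun z => μ₁ z * g z) →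
        (∀ g : Lp ℂ p (volume : Measure ℂ),
          (M₂ g : ℂ → ℂ) =ᵐ[volume] fun z => μ₂ z * g z) →
        h₁ - S (M₁ h₁) = S (hμ₁.toLp μ₁) →
        h₂ - S (M₂ h₂) = S (hμ₂.toLp μ₂) →
        ‖h₁ - h₂‖ ≤ C *
          (eLpNorm (fun z => ‖μ₁ z - μ₂ z‖ * (1 + ‖(h₂ : ℂ → ℂ) z‖)) p
            (volume : Measure ℂ)).toReal :=
  stmt16_general p d S hNeum
end
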